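/- arXiv:0704.3992 — 2 statements merged into one kernel-verified Lean document; each statement's English description precedes it below -/
import Mathlib

section
/- Let X_1, …, X_k with k ≥ 2 be pairwise disjoint nonempty closed subsets of Euclidean space ℝⁿ (n ≥ 1). Then the Hausdorff dimension of the conflict set satisfies dimH(Conf(X)) ≥ n − 1. (This is the lower-dimension half of the statement that definable conflict sets in ℝⁿ have dimension exactly n − 1; the lower bound holds with no definability assumption.) -/
/-!
Pick `a ∈ X i` and `b ∈ X j` with `i ≠ j`. The set `U` of points strictly closer to `X i` than to
every other `X l` is open, contains `a`, and its closure misses a neighbourhood of `b`; every point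
of its frontier is equidistant from `X i` and some other `X l`, so lies in the conflict set. Every
line parallel to `b - a` through a point near `a` passes near `b`, hence crosses the frontier of `U`.
So the orthogonal projection onto `(b - a)ᗮ` maps the frontier onto a set with nonempty interior,
of dimension `n - 1`, and projections do not increase Hausdorff dimension.
-/

open Metric Set MeasureTheory

/-- The territory of the set `X i` within the collection `X`. -/
def Ter {n k : ℕ} (X : Fin k → Set (EuclideanSpace ℝ (Fin n))) (i : Fin k) :
    Set (EuclideanSpace ℝ (Fin n)) :=
  {x | ∀ j, Metric.infDist x (X i) ≤ Metric.infDist x (X j)}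

/-- The conflict set of the collection `X`. -/
def Conf {n k : ℕ} (X : Fin k → Set (EuclideanSpace ℝ (Fin n))) :
    Set (EuclideanSpace ℝ (Fin n)) :=
  {x | ∃ i j, i ≠ j ∧ x ∈ Ter X i ∧ x ∈ Ter X j}

open scoped ENNReal
open Module

theorem IsPreconnected.inter_frontier_nonempty {α : Type*} [TopologicalSpace α] {s t : Set α}
    (hs : IsPreconnected s) (hst : (s ∩ t).Nonempty) (hsdt : (s \ t).Nonempty) :
    (s ∩ frontier t).Nonempty := by
  by_contra hfr
  have hcl : ∀ x ∈ s, x ∈ closure t → x ∈ interior t := fun x hx hxc => by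
    by_contra hxi
    exact hfr ⟨x, hx, hxc, hxi⟩
  have hcover : s ⊆ interior t ∪ (closure t)ᶜ := fun x hx =>
    (em (x ∈ closure t)).imp (hcl x hx) id
  obtain ⟨x, hxs, hxt⟩ := hst
  obtain ⟨y, hys, hyt⟩ := hsdt
  obtain ⟨z, -, hzi, hzc⟩ := hs _ _ isOpen_interior isClosed_closure.isOpen_compl hcover
    ⟨x, hxs, hcl x hxs (subset_closure hxt)⟩
    ⟨y, hys, fun hyc => hyt (interior_subset (hcl y hys hyc))⟩
  exact hzc (subset_closure (interior_subset hzi))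

section LinearProjection

variable {E F : Type*} [NormedAddCommGroup E] [NormedSpace ℝ E]
  [NormedAddCommGroup F] [NormedSpace ℝ F]

theorem image_ball_subset_image_frontier (L : E →L[ℝ] F) {U : Set E} {a b : E} {ε : ℝ}
    (hL : L (b - a) = 0) (ha : ball a ε ⊆ U) (hb : ball b ε ⊆ Uᶜ) :
    L '' ball a ε ⊆ L '' frontier U := by
  rintro _ ⟨x, hx, rfl⟩
  have hy : x + (b - a) ∈ ball b ε := by
    rw [mem_ball, dist_eq_norm] at hx ⊢
    convert hx using 2; abel
  obtain ⟨c, hc_seg, hc_fr⟩ :=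
    (convex_segment x (x + (b - a))).isPreconnected.inter_frontier_nonempty
      ⟨x, left_mem_segment ℝ _ _, ha hx⟩ ⟨_, right_mem_segment ℝ _ _, hb hy⟩
  rw [segment_eq_image'] at hc_seg
  obtain ⟨t, -, rfl⟩ := hc_seg
  exact ⟨_, hc_fr, by simp [hL]⟩

theorem finrank_le_dimH_frontier [CompleteSpace E] [FiniteDimensional ℝ F] (L : E →L[ℝ] F)
    (hL : Function.Surjective L) {U : Set E} {a b : E} (hLab : L (b - a) = 0)
    (ha : a ∈ interior U) (hb : b ∈ interior Uᶜ) :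
    (finrank ℝ F : ℝ≥0∞) ≤ dimH (frontier U) := by
  obtain ⟨ε₁, hε₁, ha⟩ := Metric.mem_nhds_iff.mp (mem_interior_iff_mem_nhds.mp ha)
  obtain ⟨ε₂, hε₂, hb⟩ := Metric.mem_nhds_iff.mp (mem_interior_iff_mem_nhds.mp hb)
  set ε := min ε₁ ε₂
  have hnhds : L '' ball a ε ∈ nhds (L a) := (L.isOpenMap hL _ isOpen_ball).mem_nhds
    (mem_image_of_mem L (mem_ball_self (lt_min hε₁ hε₂)))
  calc (finrank ℝ F : ℝ≥0∞) = dimH (L '' ball a ε) := (Real.dimH_of_mem_nhds hnhds).symm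
    _ ≤ dimH (L '' frontier U) := dimH_mono <| image_ball_subset_image_frontier L hLab
        ((ball_subset_ball (min_le_left _ _)).trans ha)
        ((ball_subset_ball (min_le_right _ _)).trans hb)
    _ ≤ dimH (frontier U) := L.lipschitz.dimH_image_le _

end LinearProjection

theorem finrank_sub_one_le_dimH_frontier {E : Type*} [NormedAddCommGroup E]
    [InnerProductSpace ℝ E] [FiniteDimensional ℝ E] {U : Set E} {a b : E}
    (ha : a ∈ interior U) (hb : b ∈ interior Uᶜ) :
    (finrank ℝ E : ℝ≥0∞) - 1 ≤ dimH (frontier U) := by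
  set K := (ℝ ∙ (b - a))ᗮ
  have hab : b - a ≠ 0 := sub_ne_zero.mpr fun h =>
    interior_subset hb (h ▸ interior_subset ha)
  have hK : finrank ℝ K = finrank ℝ E - 1 := Submodule.finrank_add_finrank_orthogonal' <| by
    have := Submodule.finrank_le (ℝ ∙ (b - a))
    rw [finrank_span_singleton hab] at this ⊢
    omega
  have hKab : K.orthogonalProjectionOnto (b - a) = 0 :=
    Submodule.orthogonalProjectionOnto_orthogonal_apply_eq_zero
      (Submodule.mem_span_singleton_self _)
  have := finrank_le_dimH_frontier K.orthogonalProjectionOnto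
    (fun w => ⟨w, K.orthogonalProjectionOnto_mem_subspace_eq_self w⟩) hKab ha hb
  rwa [hK, ENNReal.natCast_sub, Nat.cast_one] at this

section Territory

variable {n k : ℕ} (X : Fin k → Set (EuclideanSpace ℝ (Fin n)))

def StrictTer (i : Fin k) : Set (EuclideanSpace ℝ (Fin n)) :=
  {x | ∀ j, j ≠ i → infDist x (X i) < infDist x (X j)}

theorem isOpen_strictTer (i : Fin k) : IsOpen (StrictTer X i) := by
  simp only [StrictTer, ofPred_forall]
  exact isOpen_iInter_of_finite fun j => isOpen_iInter_of_finite fun _ =>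
    isOpen_lt (continuous_infDist_pt _) (continuous_infDist_pt _)

theorem isClosed_ter (i : Fin k) : IsClosed (Ter X i) := by
  simp only [Ter, ofPred_forall]
  exact isClosed_iInter fun j => isClosed_le (continuous_infDist_pt _) (continuous_infDist_pt _)

theorem strictTer_subset_ter (i : Fin k) : StrictTer X i ⊆ Ter X i := fun _ hx j =>
  if hj : j = i then hj ▸ le_rfl else (hx j hj).le

theorem frontier_strictTer_subset_conf (i : Fin k) : frontier (StrictTer X i) ⊆ Conf X := by
  intro x hx
  rw [(isOpen_strictTer X i).frontier_eq] at hx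
  obtain ⟨hx_cl, hx_not⟩ := hx
  have hx_ter : x ∈ Ter X i :=
    closure_minimal (strictTer_subset_ter X i) (isClosed_ter X i) hx_cl
  simp only [StrictTer, mem_ofPred_eq, not_forall, not_lt] at hx_not
  obtain ⟨j, hji, hj_le⟩ := hx_not
  exact ⟨j, i, hji, fun l => hj_le.trans (hx_ter l), hx_ter⟩

theorem disjoint_strictTer {i j : Fin k} (hij : i ≠ j) :
    Disjoint (StrictTer X i) (StrictTer X j) :=
  disjoint_left.mpr fun _ hi hj => (hi j hij.symm).not_gt (hj i hij)

theorem subset_strictTer (hdisj : ∀ i j, i ≠ j → Disjoint (X i) (X j))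
    (hne : ∀ i, (X i).Nonempty) (hcl : ∀ i, IsClosed (X i)) (i : Fin k) :
    X i ⊆ StrictTer X i := by
  intro x hx j hji
  have hxj : x ∉ X j := disjoint_left.mp (hdisj i j hji.symm) hx
  rw [infDist_zero_of_mem hx]
  exact ((hcl j).notMem_iff_infDist_pos (hne j)).mp hxj

end Territory

theorem dimH_conf_ge_general {n k : ℕ} (hk : 2 ≤ k)
    (X : Fin k → Set (EuclideanSpace ℝ (Fin n)))
    (hdisj : ∀ i j, i ≠ j → Disjoint (X i) (X j))
    (hne : ∀ i, (X i).Nonempty)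
    (hcl : ∀ i, IsClosed (X i)) :
    (n : ENNReal) - 1 ≤ dimH (Conf X) := by
  let i : Fin k := ⟨0, by omega⟩
  let j : Fin k := ⟨1, by omega⟩
  have hij : i ≠ j := by simp [i, j, Fin.ext_iff]
  obtain ⟨a, ha⟩ := hne i
  obtain ⟨b, hb⟩ := hne j
  have ha_int : a ∈ interior (StrictTer X i) := by
    rw [(isOpen_strictTer X i).interior_eq]
    exact subset_strictTer X hdisj hne hcl i ha
  have hb_int : b ∈ interior (StrictTer X i)ᶜ :=
    interior_maximal (disjoint_strictTer X hij).subset_compl_left (isOpen_strictTer X j)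
      (subset_strictTer X hdisj hne hcl j hb)
  calc (n : ℝ≥0∞) - 1 = finrank ℝ (EuclideanSpace ℝ (Fin n)) - 1 := by
        rw [finrank_euclideanSpace_fin]
    _ ≤ dimH (frontier (StrictTer X i)) := finrank_sub_one_le_dimH_frontier ha_int hb_int
    _ ≤ dimH (Conf X) := dimH_mono (frontier_strictTer_subset_conf X i)

theorem dimH_conf_ge {n k : ℕ} (hn : 1 ≤ n) (hk : 2 ≤ k)
    (X : Fin k → Set (EuclideanSpace ℝ (Fin n)))
    (hdisj : ∀ i j, i ≠ j → Disjoint (X i) (X j))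
    (hne : ∀ i, (X i).Nonempty)
    (hcl : ∀ i, IsClosed (X i)) :
    (n : ENNReal) - 1 ≤ dimH (Conf X) :=
  dimH_conf_ge_general hk X hdisj hne hcl
end

section
/- (The conflict set in the example is not normally embedded.) In ℝ³ with coordinates (x₁, x₂, x₃), let X₁ = {x : x₃ = 1 or x₃ = −1}, X₂ = {(1,0,0), (−1,0,0)}, and C = Conf({X₁, X₂}) = {x : infDist(x, X₁) = infDist(x, X₂)}. Then there is no constant K > 0 with the property that for all p, q ∈ C there exists a continuous map γ : [0,1] → ℝ³ with γ(0) = p, γ(1) = q, γ([0,1]) ⊆ C, and total variation (length) of γ on [0,1] at most K · dist(p, q). In other words, the inner (length) metric of C is not bi-Lipschitz comparable to the induced Euclidean metric. -/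
/-!
The points `p = (a, s, 0)` and `q = (-a, s, 0)` with `(a - 1)² + s² = 1` lie in `C`: they are
at distance `1` both from the planes and from the nearer of the two points. Their distance is
`2a ≤ 2s²`. But on the plane `x₁ = 0` the distance to `X₂` is `√(1 + x₂² + x₃²)`, which exceeds
the distance `1 - |x₃|` to `X₁` except at the origin, so every path in `C` from `p` to `q` passes
through `0` and has length at least `‖p‖ ≥ s`. Letting `s → 0` contradicts any linear bound.
-/

open Metric Set

/-- The union of the two horizontal planes `x₃ = 1` and `x₃ = -1` in `ℝ³`. -/
def Xone : Set (EuclideanSpace ℝ (Fin 3)) := {x | x 2 = 1 ∨ x 2 = -1}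

/-- The two points `(1,0,0)` and `(-1,0,0)` in `ℝ³`. -/
noncomputable def Xtwo : Set (EuclideanSpace ℝ (Fin 3)) :=
  {EuclideanSpace.single (0 : Fin 3) (1 : ℝ), EuclideanSpace.single (0 : Fin 3) (-1 : ℝ)}

/-- The conflict set of `Xone` and `Xtwo`: points equidistant from them. -/
noncomputable def C : Set (EuclideanSpace ℝ (Fin 3)) :=
  {x | Metric.infDist x Xone = Metric.infDist x Xtwo}

theorem Metric.infDist_union {α : Type*} [PseudoMetricSpace α] {s t : Set α} (x : α)
    (hs : s.Nonempty) (ht : t.Nonempty) :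
    infDist x (s ∪ t) = min (infDist x s) (infDist x t) := by
  rw [infDist, infEDist_union, ENNReal.toReal_min (infEDist_ne_top hs) (infEDist_ne_top ht)]
  rfl

theorem EuclideanSpace.infDist_setOf_apply_eq {ι : Type*} [Fintype ι]
    (x : EuclideanSpace ℝ ι) (i : ι) (c : ℝ) :
    infDist x {y : EuclideanSpace ℝ ι | y i = c} = |x i - c| := by
  classical
  set y := x + EuclideanSpace.single i (c - x i)
  have hy : y i = c := by simp [y]
  refine le_antisymm ?_ ((le_infDist ⟨y, hy⟩).2 fun z hz => ?_)
  · calc infDist x {y : EuclideanSpace ℝ ι | y i = c} ≤ dist x y := infDist_le_dist_of_mem hy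
      _ = |x i - c| := by
        rw [dist_eq_norm, sub_add_cancel_left, norm_neg, PiLp.norm_single,
          Real.norm_eq_abs, abs_sub_comm]
  · rw [← hz, ← Real.dist_eq]
    exact PiLp.dist_apply_le x z i

theorem infDist_Xone (x : EuclideanSpace ℝ (Fin 3)) :
    infDist x Xone = min |x 2 - 1| |x 2 + 1| := by
  have hXone : Xone = {y | y 2 = 1} ∪ {y | y 2 = -1} := ofPred_or
  rw [hXone, infDist_union _ ⟨EuclideanSpace.single 2 1, by simp⟩
    ⟨EuclideanSpace.single 2 (-1), by simp⟩, EuclideanSpace.infDist_setOf_apply_eq,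
    EuclideanSpace.infDist_setOf_apply_eq, sub_neg_eq_add]

theorem infDist_Xtwo (x : EuclideanSpace ℝ (Fin 3)) :
    infDist x Xtwo = min (√((x 0 - 1) ^ 2 + x 1 ^ 2 + x 2 ^ 2))
      (√((x 0 + 1) ^ 2 + x 1 ^ 2 + x 2 ^ 2)) := by
  rw [Xtwo, insert_eq, infDist_union _ (singleton_nonempty _) (singleton_nonempty _),
    infDist_singleton, infDist_singleton]
  simp [EuclideanSpace.dist_eq, Fin.sum_univ_three, Real.dist_eq, sq_abs]

theorem eq_zero_of_mem_C_of_apply_zero_eq_zero {x : EuclideanSpace ℝ (Fin 3)} (hx : x ∈ C)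
    (h0 : x 0 = 0) : x = 0 := by
  have hC : √(1 + x 1 ^ 2 + x 2 ^ 2) = min |x 2 - 1| |x 2 + 1| := by
    have h : infDist x Xone = infDist x Xtwo := hx
    rw [infDist_Xone, infDist_Xtwo, h0] at h
    simpa using h.symm
  have hsq {b : ℝ} (hb : √(1 + x 1 ^ 2 + x 2 ^ 2) ≤ |b|) : 1 + x 1 ^ 2 + x 2 ^ 2 ≤ b ^ 2 := by
    rwa [← Real.sqrt_sq_eq_abs, Real.sqrt_le_sqrt_iff (sq_nonneg b)] at hb
  have h1 := hsq (hC ▸ min_le_left _ _)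
  have h2 := hsq (hC ▸ min_le_right _ _)
  have hx1 : x 1 = 0 := by nlinarith
  have hx2 : x 2 = 0 := by nlinarith
  ext i
  fin_cases i <;> simp [h0, hx1, hx2]

theorem mem_C_of_apply_two_eq_zero {x : EuclideanSpace ℝ (Fin 3)} (h2 : x 2 = 0)
    (h : infDist x Xtwo = 1) : x ∈ C := by
  show infDist x Xone = infDist x Xtwo
  rw [h, infDist_Xone, h2]
  norm_num

theorem mem_C_of_sub_one_sq_add_sq_eq_one {a s : ℝ} (ha : 0 ≤ a) (has : (a - 1) ^ 2 + s ^ 2 = 1) :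
    !₂[a, s, 0] ∈ C ∧ !₂[-a, s, 0] ∈ C := by
  have hnear : √((a - 1) ^ 2 + s ^ 2) = 1 := by rw [has, Real.sqrt_one]
  have hfar : 1 ≤ √((a + 1) ^ 2 + s ^ 2) := Real.le_sqrt_of_sq_le (by nlinarith)
  constructor <;> refine mem_C_of_apply_two_eq_zero rfl ?_ <;>
    simp only [infDist_Xtwo, Matrix.cons_val_zero, Matrix.cons_val_one, Matrix.cons_val,
      zero_pow two_ne_zero, add_zero]
  · rw [hnear, min_eq_left hfar]
  · rw [show (-a - 1) ^ 2 = (a + 1) ^ 2 by ring, show (-a + 1) ^ 2 = (a - 1) ^ 2 by ring, hnear,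
      min_eq_right hfar]

theorem exists_nonneg_le_sq_sub_one_sq_add_sq_eq_one {s : ℝ} (hs : |s| ≤ 1) :
    ∃ a, 0 ≤ a ∧ a ≤ s ^ 2 ∧ (a - 1) ^ 2 + s ^ 2 = 1 := by
  have h1s : 0 ≤ 1 - s ^ 2 := by nlinarith [sq_abs s, abs_nonneg s]
  have hsqrt : √(1 - s ^ 2) ^ 2 = 1 - s ^ 2 := Real.sq_sqrt h1s
  have hle : √(1 - s ^ 2) ≤ 1 := Real.sqrt_le_one.mpr (by nlinarith)
  refine ⟨1 - √(1 - s ^ 2), by linarith, ?_, by nlinarith⟩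
  nlinarith [Real.sqrt_nonneg (1 - s ^ 2)]

theorem edist_zero_le_eVariationOn_of_image_subset_C {γ : ℝ → EuclideanSpace ℝ (Fin 3)}
    {a b : ℝ} (hab : a ≤ b) (hγ : ContinuousOn γ (Icc a b)) (hC : γ '' Icc a b ⊆ C)
    (ha : 0 ≤ γ a 0) (hb : γ b 0 ≤ 0) : edist (γ a) 0 ≤ eVariationOn γ (Icc a b) := by
  have hγ0 : ContinuousOn (fun t => γ t 0) (Icc a b) :=
    (EuclideanSpace.proj (0 : Fin 3)).continuous.comp_continuousOn hγ
  obtain ⟨t, ht, hγt⟩ := intermediate_value_Icc' hab hγ0 ⟨hb, ha⟩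
  have hzero : γ t = 0 := eq_zero_of_mem_C_of_apply_zero_eq_zero (hC ⟨t, ht, rfl⟩) hγt
  exact hzero ▸ eVariationOn.edist_le γ (left_mem_Icc.2 hab) ht

/-- The conflict set of the example is not normally embedded: no constant `K > 0`
allows joining any two points of `C` by a path inside `C` of length at most
`K` times their Euclidean distance. -/
theorem conf_example_not_normally_embedded :
    ¬ ∃ K : ℝ, 0 < K ∧ ∀ p ∈ C, ∀ q ∈ C,
      ∃ γ : ℝ → EuclideanSpace ℝ (Fin 3),
        ContinuousOn γ (Set.Icc 0 1) ∧ γ 0 = p ∧ γ 1 = q ∧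
        γ '' Set.Icc 0 1 ⊆ C ∧
        eVariationOn γ (Set.Icc 0 1) ≤ ENNReal.ofReal (K * dist p q) := by
  rintro ⟨K, hK, H⟩
  obtain ⟨s, hs0, hs1, hKs⟩ : ∃ s : ℝ, 0 < s ∧ s ≤ 1 ∧ K * s ≤ 1 / 4 :=
    ⟨min 1 (1 / (4 * K)), by positivity, min_le_left _ _, by
      grw [min_le_right, mul_one_div, div_mul_cancel_right₀ hK.ne']; norm_num⟩
  obtain ⟨a, ha0, has, hcirc⟩ :=
    exists_nonneg_le_sq_sub_one_sq_add_sq_eq_one (abs_le.2 ⟨by linarith, hs1⟩)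
  obtain ⟨hp, hq⟩ := mem_C_of_sub_one_sq_add_sq_eq_one ha0 hcirc
  obtain ⟨γ, hγ, hγ0, hγ1, hγC, hlen⟩ := H _ hp _ hq
  have hdist : dist !₂[a, s, 0] !₂[-a, s, 0] = 2 * a := by
    simp [EuclideanSpace.dist_eq, Fin.sum_univ_three, Real.dist_eq, ← two_mul, ha0]
  have hnorm : s ≤ dist !₂[a, s, 0] 0 := by
    rw [EuclideanSpace.dist_eq]
    simpa [Fin.sum_univ_three] using Real.le_sqrt_of_sq_le (le_add_of_nonneg_left (sq_nonneg a))
  have hvar := edist_zero_le_eVariationOn_of_image_subset_C zero_le_one hγ hγC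
    (by simp [hγ0, ha0]) (by simp [hγ1, ha0])
  rw [hγ0] at hvar
  rw [hdist] at hlen
  have : s ≤ K * (2 * a) := hnorm.trans ((edist_le_ofReal (by positivity)).1 (hvar.trans hlen))
  nlinarith
end
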